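/- (Krichevsky–Trofimov regret bound, binary-alphabet instance) Let y_1,…,y_T ∈ {0,1} and let the sequential probability assignment be Q_{t−1}(y) = (N_{t−1}(y) + 1/2)/((t−1) + 1), where N_{t−1}(y) = #{s < t : y_s = y}. Then −∑_{t=1}^T log Q_{t−1}(y_t) − min_{q∈[0,1]} (−∑_{t=1}^T log q^{1{y_t=1}}(1−q)^{1{y_t=0}}) ≤ (1/2)·log T + C for some absolute constant C and all T ≥ 1. -/

import Mathlib

/-!
The Krichevsky–Trofimov probability of a sequence with `k` ones and `j` zeros depends only on
`(k, j)`: the numerators telescope to `∏_{i<k} (i + 1/2) * ∏_{i<j} (i + 1/2)` and the denominators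
to `T!`. Stirling's formula bounds the logarithm of each such product below by `m log m - m`, and
`log T!` above by `T log T - T + (log T) / 2 + 1`, while Gibbs' inequality bounds the loss of every
constant assignment below by the empirical entropy `T log T - k log k - j log j`. Since
`k + j = T` the linear terms cancel, and the regret is at most `(log T) / 2 + 1`.
-/

open Finset Real
open scoped Nat

theorem sum_Icc_prefix_count_eq {α M : Type*} [DecidableEq α] [Fintype α] [AddCommMonoid M]
    (y : ℕ → α) (g : ℕ → M) (T : ℕ) :
    ∑ t ∈ Icc 1 T, g #{s ∈ Icc 1 (t - 1) | y s = y t} =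
      ∑ a, ∑ i ∈ range #{s ∈ Icc 1 T | y s = a}, g i := by
  induction T with
  | zero => simp
  | succ T ih =>
    have hcount (a : α) : #{s ∈ Icc 1 (T + 1) | y s = a} =
        #{s ∈ Icc 1 T | y s = a} + if y (T + 1) = a then 1 else 0 := by
      simp only [card_filter, sum_Icc_succ_top (Nat.le_add_left 1 T)]
    have hsum (a : α) : ∑ i ∈ range #{s ∈ Icc 1 (T + 1) | y s = a}, g i =
        ∑ i ∈ range #{s ∈ Icc 1 T | y s = a}, g i +
          if y (T + 1) = a then g #{s ∈ Icc 1 T | y s = a} else 0 := by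
      rw [hcount]
      split_ifs <;> simp [sum_range_succ]
    simp only [sum_Icc_succ_top (Nat.le_add_left 1 T), ih, hsum, sum_add_distrib,
      Fintype.sum_ite_eq, Nat.add_sub_cancel]

theorem sum_Icc_log_natCast (T : ℕ) : ∑ t ∈ Icc 1 T, log (t : ℝ) = log T ! := by
  rw [← log_prod (fun t ht => by have := (mem_Icc.mp ht).1; positivity), ← Nat.cast_prod,
    ← Ico_add_one_right_eq_Icc, prod_Ico_id_eq_factorial]

theorem neg_sum_log_kt_eq (y : ℕ → Bool) (T : ℕ) :
    -∑ t ∈ Icc 1 T, log ((#{s ∈ Icc 1 (t - 1) | y s = y t} + 1 / 2 : ℝ) / t) =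
      log T ! - ∑ b, ∑ i ∈ range #{s ∈ Icc 1 T | y s = b}, log ((i : ℝ) + 1 / 2) := by
  have hdiv : ∀ t ∈ Icc 1 T, log ((#{s ∈ Icc 1 (t - 1) | y s = y t} + 1 / 2 : ℝ) / t) =
      log ((#{s ∈ Icc 1 (t - 1) | y s = y t} : ℝ) + 1 / 2) - log t := fun t ht =>
    log_div (by positivity) (by have := (mem_Icc.mp ht).1; positivity)
  rw [sum_congr rfl hdiv, sum_sub_distrib, sum_Icc_log_natCast,
    sum_Icc_prefix_count_eq y (fun i => log ((i : ℝ) + 1 / 2))]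
  ring

theorem prod_range_add_half_mul_four_pow_mul_factorial (m : ℕ) :
    (∏ i ∈ range m, ((i : ℝ) + 1 / 2)) * (4 ^ m * m !) = (2 * m)! := by
  induction m with
  | zero => simp
  | succ m ih =>
    rw [prod_range_succ, show 2 * (m + 1) = 2 * m + 1 + 1 by ring, Nat.factorial_succ,
      Nat.factorial_succ, Nat.factorial_succ]
    push_cast
    rw [← ih]
    ring

theorem log_factorial_le_stirling {n : ℕ} (hn : n ≠ 0) :
    log n ! ≤ n * log n - n + log n / 2 + 1 := by
  have hseq : log (Stirling.stirlingSeq n) ≤ log (Stirling.stirlingSeq 1) := by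
    obtain ⟨m, rfl⟩ := Nat.exists_eq_add_of_le' (Nat.one_le_iff_ne_zero.mpr hn)
    exact Stirling.log_stirlingSeq'_antitone (Nat.zero_le m)
  have hn' : (0 : ℝ) < n := by positivity
  rw [Stirling.log_stirlingSeq_formula, Stirling.stirlingSeq_one,
    log_div (exp_ne_zero 1) (by positivity), log_exp, log_sqrt zero_le_two,
    log_mul two_ne_zero hn'.ne', log_div hn'.ne' (exp_ne_zero 1), log_exp] at hseq
  linarith

theorem mul_log_sub_le_sum_log_add_half (m : ℕ) :
    m * log m - m ≤ ∑ i ∈ range m, log ((i : ℝ) + 1 / 2) := by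
  rcases eq_or_ne m 0 with rfl | hm
  · simp
  have hprod := prod_range_add_half_mul_four_pow_mul_factorial m
  have hlog : ∑ i ∈ range m, log ((i : ℝ) + 1 / 2) = log (2 * m)! - m * log 4 - log m ! := by
    rw [← log_prod (fun i _ => by positivity), ← hprod, log_mul (by positivity) (by positivity),
      log_mul (by positivity) (by positivity), log_pow]
    ring
  -- Stirling below for `(2m)!` and above for `m!` leave the constant `log 2 + (log π) / 2 - 1 > 0`.
  have hupper := log_factorial_le_stirling hm
  have hlower := Stirling.le_log_factorial_stirling (n := 2 * m) (by positivity)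
  have hm' : (0 : ℝ) < m := by positivity
  have hlog4 : log (4 : ℝ) = 2 * log 2 := by
    rw [show (4 : ℝ) = 2 ^ 2 by norm_num, log_pow]; norm_num
  have hlog2m : log (2 * m : ℝ) = log 2 + log m := log_mul two_ne_zero hm'.ne'
  have hlog2pi : log (2 * π) = log 2 + log π := log_mul two_ne_zero pi_ne_zero
  have hlogpi : 1 < log π := by
    rw [lt_log_iff_exp_lt pi_pos]; exact exp_one_lt_d9.trans (by linarith [pi_gt_three])
  push_cast at hlower
  rw [hlog, hlog4]
  rw [hlog2m, hlog2pi] at hlower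
  linarith [log_two_gt_d9]

theorem mul_log_le_mul_log_add_sub {a b : ℝ} (ha : 0 ≤ a) (hb : 0 < b) :
    a * log b ≤ a * log a + b - a := by
  rcases ha.eq_or_lt with rfl | ha
  · simpa using hb.le
  have h := mul_le_mul_of_nonneg_left (log_le_sub_one_of_pos (div_pos hb ha)) ha.le
  rw [log_div hb.ne' ha.ne', mul_sub, mul_sub, mul_div_cancel₀ b ha.ne'] at h
  linarith

theorem entropy_le_cross_entropy {k j q : ℝ} (hk : 0 ≤ k) (hj : 0 ≤ j) (hkj : 0 < k + j)
    (hq : q ∈ Set.Ioo 0 1) :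
    (k + j) * log (k + j) - k * log k - j * log j ≤ -(k * log q + j * log (1 - q)) := by
  obtain ⟨hq₀, hq₁⟩ := hq
  have h₁ := mul_log_le_mul_log_add_sub hk (mul_pos hq₀ hkj)
  have h₂ := mul_log_le_mul_log_add_sub hj (mul_pos (sub_pos.mpr hq₁) hkj)
  rw [log_mul hq₀.ne' hkj.ne'] at h₁
  rw [log_mul (sub_pos.mpr hq₁).ne' hkj.ne'] at h₂
  linarith

theorem card_filter_eq_true_add_card_filter_eq_false {α : Type*} (s : Finset α) (y : α → Bool) :
    #{t ∈ s | y t = true} + #{t ∈ s | y t = false} = #s := by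
  simpa using card_filter_add_card_filter_not (s := s) (fun t => y t = true)

theorem sum_log_ite {α : Type*} (s : Finset α) (y : α → Bool) (q : ℝ) :
    ∑ t ∈ s, log (if y t then q else 1 - q) =
      #{t ∈ s | y t = true} * log q + #{t ∈ s | y t = false} * log (1 - q) := by
  simp [apply_ite log, sum_ite]

theorem le_sInf_neg_sum_log_ite {α : Type*} (s : Finset α) (hs : s.Nonempty) (y : α → Bool) :
    (#s : ℝ) * log #s - #{t ∈ s | y t = true} * log #{t ∈ s | y t = true} -
        #{t ∈ s | y t = false} * log #{t ∈ s | y t = false} ≤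
      sInf {v : ℝ | ∃ q ∈ Set.Ioo (0 : ℝ) 1, v = -∑ t ∈ s, log (if y t then q else 1 - q)} := by
  refine le_csInf ⟨_, 1 / 2, by norm_num, rfl⟩ ?_
  rintro v ⟨q, hq, rfl⟩
  have hcard : (#{t ∈ s | y t = true} : ℝ) + #{t ∈ s | y t = false} = #s := by
    exact_mod_cast card_filter_eq_true_add_card_filter_eq_false s y
  rw [sum_log_ite, ← hcard]
  exact entropy_le_cross_entropy (Nat.cast_nonneg _) (Nat.cast_nonneg _)
    (by rw [hcard]; exact_mod_cast hs.card_pos) hq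

theorem stmt_15 :
    ∃ C : ℝ, ∀ T : ℕ, 1 ≤ T → ∀ y : ℕ → Bool,
      (-∑ t ∈ Finset.Icc 1 T,
          Real.log
            ((((Finset.Icc 1 (t - 1)).filter (fun s => y s = y t)).card + 1 / 2 : ℝ) / t)) -
        sInf {v : ℝ | ∃ q ∈ Set.Ioo (0 : ℝ) 1,
          v = -∑ t ∈ Finset.Icc 1 T, Real.log (if y t then q else 1 - q)} ≤
      (1 / 2 : ℝ) * Real.log T + C := by
  refine ⟨1, fun T hT y => ?_⟩
  have hcard : #(Icc 1 T) = T := by simp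
  have hentropy := le_sInf_neg_sum_log_ite (Icc 1 T) (nonempty_Icc.mpr hT) y
  have hkj : (#{s ∈ Icc 1 T | y s = true} : ℝ) + #{s ∈ Icc 1 T | y s = false} = T := by
    exact_mod_cast hcard ▸ card_filter_eq_true_add_card_filter_eq_false (Icc 1 T) y
  rw [hcard] at hentropy
  rw [neg_sum_log_kt_eq, Fintype.sum_bool]
  linarith [log_factorial_le_stirling (Nat.one_le_iff_ne_zero.mp hT),
    mul_log_sub_le_sum_log_add_half #{s ∈ Icc 1 T | y s = true},
    mul_log_sub_le_sum_log_add_half #{s ∈ Icc 1 T | y s = false}]
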